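/- For every BZ triangle Q there exists a unique BZ triangle Q_min with ∂(Q_min) = ∂(Q) such that at least one corner entry of Q_min is equal to 0. -/

import Mathlib

/-- The hexagon relations on a point of `ℤ⁹` with coordinates
`(a₁,b₁,c₁,a₂,a₃,b₂,b₃,c₂,c₃)` (indices `0,…,8`). -/
def hex (x : Fin 9 → ℤ) : Prop :=
  x 3 + x 4 = x 6 + x 7 ∧ x 5 + x 6 = x 8 + x 3 ∧ x 7 + x 8 = x 4 + x 5

/-- A BZ triangle: a point of `ℕ⁹` (all entries nonnegative) satisfying the
hexagon relations. -/
def isBZ (x : Fin 9 → ℤ) : Prop := (∀ i, 0 ≤ x i) ∧ hex x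

/-- The boundary map `∂ : ℤ⁹ → (ℤ²)³`. -/
def bd (x : Fin 9 → ℤ) : Fin 3 → ℤ × ℤ :=
  ![(x 0 + x 3, x 4 + x 1), (x 1 + x 5, x 6 + x 2), (x 2 + x 7, x 8 + x 0)]


/-!
Both the hexagon relations and `∂` are linear, and their common kernel is the line spanned by
`cornerShift`, which lowers the three corners by one and raises the six hexagon entries by one.
So the triangles with the boundary of `Q` are the `Q - t • cornerShift`, whose minimal corner is
`cornerMin Q - t`; exactly one of them, `t = cornerMin Q`, has nonnegative corners with one of
them `0`, and it is a BZ triangle because its hexagon entries only grew.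
-/

def cornerShift : Fin 9 → ℤ := ![1, 1, 1, -1, -1, -1, -1, -1, -1]

def cornerMin (x : Fin 9 → ℤ) : ℤ := min (x 0) (min (x 1) (x 2))

section

variable (x : Fin 9 → ℤ) (t : ℤ)

lemma hex_sub_smul_cornerShift (hx : hex x) : hex (x - t • cornerShift) := by
  simp only [hex, cornerShift, Pi.sub_apply, Matrix.smul_cons, smul_eq_mul, Matrix.smul_empty,
    Matrix.cons_val, mul_one, mul_neg, sub_neg_eq_add] at hx ⊢
  omega

lemma bd_sub_smul_cornerShift : bd (x - t • cornerShift) = bd x := by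
  funext i
  fin_cases i <;> simp [bd, cornerShift]

lemma cornerMin_sub_smul_cornerShift : cornerMin (x - t • cornerShift) = cornerMin x - t := by
  simp only [cornerMin, cornerShift, Pi.sub_apply, Matrix.smul_cons, smul_eq_mul,
    Matrix.smul_empty, Matrix.cons_val, mul_one]
  omega

end

lemma cornerMin_eq_zero_iff (x : Fin 9 → ℤ) :
    cornerMin x = 0 ↔ (0 ≤ x 0 ∧ 0 ≤ x 1 ∧ 0 ≤ x 2) ∧ (x 0 = 0 ∨ x 1 = 0 ∨ x 2 = 0) := by
  simp only [cornerMin]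
  omega

lemma exists_eq_sub_smul_cornerShift_of_bd_eq {x y : Fin 9 → ℤ} (hx : hex x) (hy : hex y)
    (h : bd y = bd x) : ∃ t : ℤ, y = x - t • cornerShift := by
  have e0 := congrFun h 0
  have e1 := congrFun h 1
  have e2 := congrFun h 2
  simp only [bd, Prod.ext_iff, Matrix.cons_val] at e0 e1 e2
  obtain ⟨hx1, hx2, hx3⟩ := hx
  obtain ⟨hy1, hy2, hy3⟩ := hy
  refine ⟨x 0 - y 0, funext fun i => ?_⟩
  fin_cases i <;> simp [cornerShift] <;> omega

lemma isBZ_sub_smul_cornerShift {x : Fin 9 → ℤ} (hx : isBZ x) {t : ℤ} (ht₀ : 0 ≤ t)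
    (ht : t ≤ cornerMin x) : isBZ (x - t • cornerShift) := by
  refine ⟨fun i => ?_, hex_sub_smul_cornerShift x t hx.2⟩
  have hxi := hx.1 i
  simp only [cornerMin] at ht
  revert hxi
  fin_cases i <;> simp [cornerShift] <;> omega

theorem stmt_2 (Q : Fin 9 → ℤ) (hQ : isBZ Q) :
    ∃! Qmin : Fin 9 → ℤ, isBZ Qmin ∧ bd Qmin = bd Q ∧
      (Qmin 0 = 0 ∨ Qmin 1 = 0 ∨ Qmin 2 = 0) := by
  have hmin : 0 ≤ cornerMin Q := le_min (hQ.1 0) (le_min (hQ.1 1) (hQ.1 2))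
  have hcorner : cornerMin (Q - cornerMin Q • cornerShift) = 0 := by
    rw [cornerMin_sub_smul_cornerShift, sub_self]
  refine ⟨Q - cornerMin Q • cornerShift, ⟨isBZ_sub_smul_cornerShift hQ hmin le_rfl,
    bd_sub_smul_cornerShift Q _, ((cornerMin_eq_zero_iff _).1 hcorner).2⟩, ?_⟩
  rintro y ⟨hy, hbd, hy_corner⟩
  obtain ⟨t, rfl⟩ := exists_eq_sub_smul_cornerShift_of_bd_eq hQ.2 hy.2 hbd
  have ht : cornerMin (Q - t • cornerShift) = 0 :=
    (cornerMin_eq_zero_iff _).2 ⟨⟨hy.1 0, hy.1 1, hy.1 2⟩, hy_corner⟩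
  rw [cornerMin_sub_smul_cornerShift, sub_eq_zero] at ht
  rw [ht]
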